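/- Let H be a Krein space with fundamental symmetry J whose eigenspaces H± = ker(J ∓ I) are both nonzero, and let M ≠ {0} be a J-nonnegative (or J-nonpositive) subspace of H with definiteness bound α, i.e. α is the largest constant in [0,1] such that α‖f‖² ≤ [f,f] for all f ∈ M (resp. [f,f] ≤ −α‖f‖² for all f ∈ M). Then c₀(M, C) = (1/√2)(√((1+α)/2) + √((1−α)/2)). In particular, M is uniformly J-definite if and only if c₀(M, C) < 1. -/

import Mathlib

/- Frames for Krein spaces ("J-frames"), following Giribet–Maestripieri–Martínez Pería–Massey.

A Krein space is modelled as a complex Hilbert space `H` together with a fundamental symmetry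
`J : H →L[ℂ] H` (selfadjoint, `J ∘L J = 1`); the indefinite inner product is `[x,y] = ⟪J x, y⟫`. -/

noncomputable section

open scoped ComplexInnerProductSpace ComplexOrder
open ContinuousLinearMap

attribute [local instance] Classical.propDecidable

namespace KreinFrames

universe u

variable {H : Type*} [NormedAddCommGroup H] [InnerProductSpace ℂ H]

/-- A subspace `M` is uniformly `J`-positive: `[x,x] ≥ α‖x‖²` on `M` for some `α > 0`. -/
def UnifJPos (J : H →L[ℂ] H) (M : Submodule ℂ H) : Prop :=
  ∃ α : ℝ, 0 < α ∧ ∀ x ∈ M, α * ‖x‖ ^ 2 ≤ (⟪J x, x⟫).re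

/-- A subspace `M` is uniformly `J`-negative: `[x,x] ≤ -α‖x‖²` on `M` for some `α > 0`. -/
def UnifJNeg (J : H →L[ℂ] H) (M : Submodule ℂ H) : Prop :=
  ∃ α : ℝ, 0 < α ∧ ∀ x ∈ M, (⟪J x, x⟫).re ≤ -(α * ‖x‖ ^ 2)

/-- Maximal uniformly `J`-positive subspace. -/
def MaxUnifJPos (J : H →L[ℂ] H) (M : Submodule ℂ H) : Prop :=
  UnifJPos J M ∧ ∀ M' : Submodule ℂ H, UnifJPos J M' → M ≤ M' → M' = M

/-- Maximal uniformly `J`-negative subspace. -/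
def MaxUnifJNeg (J : H →L[ℂ] H) (M : Submodule ℂ H) : Prop :=
  UnifJNeg J M ∧ ∀ M' : Submodule ℂ H, UnifJNeg J M' → M ≤ M' → M' = M

/-- The `J`-orthogonal companion `M^{[⊥]} = {x | [x,m] = 0 ∀ m ∈ M}` of a subspace `M`. -/
def Jorth (J : H →L[ℂ] H) (M : Submodule ℂ H) : Submodule ℂ H where
  carrier := {x | ∀ m ∈ M, ⟪J x, m⟫ = 0}
  zero_mem' := by intro m _; simp
  add_mem' := by
    intro a b ha hb m hm
    rw [map_add, inner_add_left, ha m hm, hb m hm, add_zero]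
  smul_mem' := by
    intro c x hx m hm
    rw [map_smul, inner_smul_left, hx m hm, mul_zero]

/-- `T : ℓ²(I) → H` is the synthesis operator of the family `f`, i.e. `T e_i = f_i`. -/
def IsSynthesis {I : Type*} (f : I → H) (T : lp (fun _ : I => ℂ) 2 →L[ℂ] H) : Prop :=
  ∀ i, T (lp.single 2 i 1) = f i

/-- `f` is a `J`-frame: it is a Bessel family (it admits a bounded synthesis operator `T`),
and the ranges of `T₊ = T P₊` and `T₋ = T P₋` (the synthesis operators of the subfamilies of
`J`-nonnegative and `J`-negative vectors) are maximal uniformly `J`-positive resp. maximal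
uniformly `J`-negative subspaces of `H`. -/
def IsJFrame {I : Type*} (J : H →L[ℂ] H) (f : I → H) : Prop :=
  ∃ T Tp Tm : lp (fun _ : I => ℂ) 2 →L[ℂ] H,
    IsSynthesis f T ∧
    IsSynthesis (fun i => if 0 ≤ (⟪J (f i), f i⟫).re then f i else 0) Tp ∧
    IsSynthesis (fun i => if 0 ≤ (⟪J (f i), f i⟫).re then 0 else f i) Tm ∧
    MaxUnifJPos J (LinearMap.range (Tp : lp (fun _ : I => ℂ) 2 →ₗ[ℂ] H)) ∧
    MaxUnifJNeg J (LinearMap.range (Tm : lp (fun _ : I => ℂ) 2 →ₗ[ℂ] H))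

/-- `c₀(M, C)`: supremum of `|⟪m,n⟫|` over unit vectors `m ∈ M` and unit `J`-neutral vectors
`n` (the cone `C = {n | [n,n] = 0}`). -/
def c0 (J : H →L[ℂ] H) (M : Submodule ℂ H) : ℝ :=
  sSup {r : ℝ | ∃ m ∈ M, ∃ n : H, ⟪J n, n⟫ = 0 ∧ ‖m‖ = 1 ∧ ‖n‖ = 1 ∧ r = ‖⟪m, n⟫‖}

/-- Cosine of the Friedrichs angle between two subspaces. -/
def friedrichs (S T : Submodule ℂ H) : ℝ :=
  sSup {r : ℝ | ∃ x ∈ S ⊓ (S ⊓ T)ᗮ, ∃ y ∈ T ⊓ (S ⊓ T)ᗮ, ‖x‖ = 1 ∧ ‖y‖ = 1 ∧ r = ‖⟪x, y⟫‖}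

/-- The reduced minimum modulus `γ(A) = inf {‖Ax‖ : x ∈ N(A)^⊥, ‖x‖ = 1}`. -/
def rmm {E F : Type*} [NormedAddCommGroup E] [InnerProductSpace ℂ E]
    [NormedAddCommGroup F] [InnerProductSpace ℂ F] (A : E →L[ℂ] F) : ℝ :=
  sInf {r : ℝ | ∃ x ∈ (LinearMap.ker (A : E →ₗ[ℂ] F))ᗮ, ‖x‖ = 1 ∧ r = ‖A x‖}

/-- The set `Q` of bounded idempotents with uniformly `J`-positive range and uniformly
`J`-negative kernel. -/
def QSet (J : H →L[ℂ] H) : Set (H →L[ℂ] H) :=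
  {Q | Q ∘L Q = Q ∧ UnifJPos J (LinearMap.range (Q : H →ₗ[ℂ] H)) ∧
    UnifJNeg J (LinearMap.ker (Q : H →ₗ[ℂ] H))}

/-- `ℓ²(s)` as a subspace of `ℓ²(I)`, for `s : Set I`. -/
def lpSub {I : Type*} (s : Set I) : Submodule ℂ (lp (fun _ : I => ℂ) 2) where
  carrier := {x | ∀ i ∉ s, x i = 0}
  zero_mem' := by intro i _; simp
  add_mem' := by
    intro a b ha hb i hi
    have h : (↑(a + b) : ∀ _ : I, ℂ) i = a i + b i := by rw [lp.coeFn_add]; rfl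
    rw [h, ha i hi, hb i hi, add_zero]
  smul_mem' := by
    intro c x hx i hi
    have h : (↑(c • x) : ∀ _ : I, ℂ) i = c • (x i : ℂ) := by rw [lp.coeFn_smul]; rfl
    rw [h, hx i hi, smul_zero]

/-- `S` is the `J`-frame operator of some `J`-frame: `S = T T^#` where `T` is the synthesis
operator of a `J`-frame and `T^# = J₂ T* J`. -/
def IsJFrameOperator {H : Type u} [NormedAddCommGroup H] [InnerProductSpace ℂ H]
    [CompleteSpace H] (J S : H →L[ℂ] H) : Prop :=
  ∃ (I : Type u) (f : I → H) (T Tp Tm : lp (fun _ : I => ℂ) 2 →L[ℂ] H)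
    (J2 : lp (fun _ : I => ℂ) 2 →L[ℂ] lp (fun _ : I => ℂ) 2),
    IsSynthesis f T ∧
    IsSynthesis (fun i => if 0 ≤ (⟪J (f i), f i⟫).re then f i else 0) Tp ∧
    IsSynthesis (fun i => if 0 ≤ (⟪J (f i), f i⟫).re then 0 else f i) Tm ∧
    MaxUnifJPos J (LinearMap.range (Tp : lp (fun _ : I => ℂ) 2 →ₗ[ℂ] H)) ∧
    MaxUnifJNeg J (LinearMap.range (Tm : lp (fun _ : I => ℂ) 2 →ₗ[ℂ] H)) ∧
    (∀ (x : lp (fun _ : I => ℂ) 2) (i : I),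
      J2 x i = if 0 ≤ (⟪J (f i), f i⟫).re then (x i : ℂ) else -(x i : ℂ)) ∧
    S = T ∘L J2 ∘L adjoint T ∘L J

/-!
Write `x = P₊x + P₋x` with `P± = (1 ± J)/2`, an orthogonal splitting in which
`⟪x, y⟫ = ⟪P₊x, P₊y⟫ + ⟪P₋x, P₋y⟫` and `[x, y] = ⟪P₊x, P₊y⟫ - ⟪P₋x, P₋y⟫`.
A unit vector `m` with `[m, m] = t` has `‖P±m‖ = √((1 ± t)/2)`, a unit neutral vector `n` has
`‖P±n‖ = 1/√2`, so Cauchy–Schwarz on each component gives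
`|⟪m, n⟫| ≤ (‖P₊m‖ + ‖P₋m‖)/√2 = neutralCos t`, with equality for `n = (e₊ + e₋)/√2` where
`e±` is a unit vector of `H±` aligned with `P±m`. As `neutralCos` is continuous and decreasing on
`[0, 1]`, the supremum over the unit sphere of `M` is `neutralCos` of the infimum `α` of `[m, m]`,
and `neutralCos α < 1` exactly when `α > 0`. A `J`-nonpositive subspace is `(-J)`-nonnegative.
-/

lemma exists_mem_norm_eq_one {K : Submodule ℂ H} (hK : K ≠ ⊥) : ∃ e ∈ K, ‖e‖ = 1 := by
  obtain ⟨w, hwK, hw⟩ := Submodule.exists_mem_ne_zero_of_ne_bot hK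
  exact ⟨(‖w‖⁻¹ : ℂ) • w, K.smul_mem _ hwK, norm_smul_inv_norm hw⟩

lemma exists_mem_norm_eq_one_inner_eq_norm {K : Submodule ℂ H} (hK : K ≠ ⊥) {p : H}
    (hp : p ∈ K) : ∃ e ∈ K, ‖e‖ = 1 ∧ ⟪p, e⟫ = ‖p‖ := by
  rcases eq_or_ne p 0 with rfl | hp0
  · obtain ⟨e, heK, he⟩ := exists_mem_norm_eq_one hK
    exact ⟨e, heK, he, by simp⟩
  · refine ⟨(‖p‖⁻¹ : ℂ) • p, K.smul_mem _ hp, norm_smul_inv_norm hp0, ?_⟩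
    have : (‖p‖ : ℂ) ≠ 0 := by exact_mod_cast norm_ne_zero_iff.mpr hp0
    rw [inner_smul_right, inner_self_eq_norm_sq_to_K]
    field_simp
    rfl

def plusProj (J : H →L[ℂ] H) : H →L[ℂ] H := (2⁻¹ : ℂ) • (1 + J)

def minusProj (J : H →L[ℂ] H) : H →L[ℂ] H := (2⁻¹ : ℂ) • (1 - J)

section FundamentalSymmetry

variable {J : H →L[ℂ] H}

lemma plusProj_apply (x : H) : plusProj J x = (2⁻¹ : ℂ) • (x + J x) := rfl

lemma minusProj_apply (x : H) : minusProj J x = (2⁻¹ : ℂ) • (x - J x) := rfl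

lemma apply_apply_of_comp_self (hJsq : J ∘L J = 1) (x : H) : J (J x) = x :=
  congr($hJsq x)

lemma mem_ker_sub_one_iff {x : H} :
    x ∈ LinearMap.ker ((J - 1 : H →L[ℂ] H) : H →ₗ[ℂ] H) ↔ J x = x := by
  simp [sub_eq_zero]

lemma mem_ker_add_one_iff {x : H} :
    x ∈ LinearMap.ker ((J + 1 : H →L[ℂ] H) : H →ₗ[ℂ] H) ↔ J x = -x := by
  simp [add_eq_zero_iff_eq_neg]

lemma plusProj_mem_ker (hJsq : J ∘L J = 1) (x : H) :
    plusProj J x ∈ LinearMap.ker ((J - 1 : H →L[ℂ] H) : H →ₗ[ℂ] H) := by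
  rw [mem_ker_sub_one_iff, plusProj_apply, map_smul, map_add, apply_apply_of_comp_self hJsq,
    add_comm]

lemma minusProj_mem_ker (hJsq : J ∘L J = 1) (x : H) :
    minusProj J x ∈ LinearMap.ker ((J + 1 : H →L[ℂ] H) : H →ₗ[ℂ] H) := by
  rw [mem_ker_add_one_iff, minusProj_apply, map_smul, map_sub, apply_apply_of_comp_self hJsq,
    ← smul_neg, neg_sub]

lemma inner_plusProj (hJs : (J : H →ₗ[ℂ] H).IsSymmetric) (hJsq : J ∘L J = 1) (x y : H) :
    ⟪plusProj J x, plusProj J y⟫ = (⟪x, y⟫ + ⟪J x, y⟫) / 2 := by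
  have hsymm : ⟪x, J y⟫ = ⟪J x, y⟫ := (hJs x y).symm
  have hJJ : ⟪J x, J y⟫ = ⟪x, y⟫ := by
    rw [show ⟪J x, J y⟫ = ⟪x, J (J y)⟫ from hJs x (J y), apply_apply_of_comp_self hJsq]
  simp only [plusProj_apply, inner_smul_left, inner_smul_right, map_inv₀, map_ofNat,
    inner_add_left, inner_add_right, hJJ, hsymm]
  ring

lemma inner_minusProj (hJs : (J : H →ₗ[ℂ] H).IsSymmetric) (hJsq : J ∘L J = 1) (x y : H) :
    ⟪minusProj J x, minusProj J y⟫ = (⟪x, y⟫ - ⟪J x, y⟫) / 2 := by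
  have hsymm : ⟪x, J y⟫ = ⟪J x, y⟫ := (hJs x y).symm
  have hJJ : ⟪J x, J y⟫ = ⟪x, y⟫ := by
    rw [show ⟪J x, J y⟫ = ⟪x, J (J y)⟫ from hJs x (J y), apply_apply_of_comp_self hJsq]
  simp only [minusProj_apply, inner_smul_left, inner_smul_right, map_inv₀, map_ofNat,
    inner_sub_left, inner_sub_right, hJJ, hsymm]
  ring

lemma inner_eq_inner_plusProj_add (hJs : (J : H →ₗ[ℂ] H).IsSymmetric) (hJsq : J ∘L J = 1)
    (x y : H) :
    ⟪x, y⟫ = ⟪plusProj J x, plusProj J y⟫ + ⟪minusProj J x, minusProj J y⟫ := by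
  rw [inner_plusProj hJs hJsq, inner_minusProj hJs hJsq]
  ring

lemma inner_apply_eq_inner_plusProj_sub (hJs : (J : H →ₗ[ℂ] H).IsSymmetric) (hJsq : J ∘L J = 1)
    (x y : H) :
    ⟪J x, y⟫ = ⟪plusProj J x, plusProj J y⟫ - ⟪minusProj J x, minusProj J y⟫ := by
  rw [inner_plusProj hJs hJsq, inner_minusProj hJs hJsq]
  ring

lemma norm_plusProj_sq (hJs : (J : H →ₗ[ℂ] H).IsSymmetric) (hJsq : J ∘L J = 1) (x : H) :
    ‖plusProj J x‖ ^ 2 = (‖x‖ ^ 2 + (⟪J x, x⟫).re) / 2 := by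
  rw [← inner_self_eq_norm_sq (𝕜 := ℂ), inner_plusProj hJs hJsq, ← inner_self_eq_norm_sq (𝕜 := ℂ),
    RCLike.re_to_complex, RCLike.re_to_complex, Complex.div_ofNat_re, Complex.add_re]

lemma norm_minusProj_sq (hJs : (J : H →ₗ[ℂ] H).IsSymmetric) (hJsq : J ∘L J = 1) (x : H) :
    ‖minusProj J x‖ ^ 2 = (‖x‖ ^ 2 - (⟪J x, x⟫).re) / 2 := by
  rw [← inner_self_eq_norm_sq (𝕜 := ℂ), inner_minusProj hJs hJsq, ← inner_self_eq_norm_sq (𝕜 := ℂ),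
    RCLike.re_to_complex, RCLike.re_to_complex, Complex.div_ofNat_re, Complex.sub_re]

lemma re_inner_apply_self_le (hJs : (J : H →ₗ[ℂ] H).IsSymmetric) (hJsq : J ∘L J = 1) (x : H) :
    (⟪J x, x⟫).re ≤ ‖x‖ ^ 2 := by
  have := norm_minusProj_sq hJs hJsq x
  nlinarith [sq_nonneg ‖minusProj J x‖]

end FundamentalSymmetry

def neutralCos (t : ℝ) : ℝ := 1 / Real.sqrt 2 * (Real.sqrt ((1 + t) / 2) + Real.sqrt ((1 - t) / 2))

lemma neutralCos_eq_sqrt {t : ℝ} (ht : t ∈ Set.Icc (-1 : ℝ) 1) :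
    neutralCos t = Real.sqrt ((1 + Real.sqrt (1 - t ^ 2)) / 2) := by
  obtain ⟨ht₀, ht₁⟩ := ht
  have hprod : Real.sqrt ((1 + t) / 2) * Real.sqrt ((1 - t) / 2) = Real.sqrt (1 - t ^ 2) / 2 := by
    rw [← Real.sqrt_mul (by linarith),
      show (1 + t) / 2 * ((1 - t) / 2) = (1 - t ^ 2) / 2 ^ 2 by ring, Real.sqrt_div' _ (by positivity), Real.sqrt_sq (by norm_num)]
  rw [neutralCos, eq_comm, Real.sqrt_eq_iff_eq_sq (by positivity) (by positivity), mul_pow, add_sq,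
    Real.sq_sqrt (by linarith), Real.sq_sqrt (by linarith), mul_assoc, hprod, div_pow,
    Real.sq_sqrt (by norm_num)]
  ring

lemma continuous_neutralCos : Continuous neutralCos := by
  unfold neutralCos
  fun_prop

lemma antitoneOn_neutralCos : AntitoneOn neutralCos (Set.Icc 0 1) := by
  intro s ⟨hs₀, hs₁⟩ t ⟨ht₀, ht₁⟩ hst
  rw [neutralCos_eq_sqrt ⟨by linarith, ht₁⟩, neutralCos_eq_sqrt ⟨by linarith, hs₁⟩]
  gcongr

lemma neutralCos_lt_one_iff {t : ℝ} (ht : t ∈ Set.Icc (0 : ℝ) 1) : neutralCos t < 1 ↔ 0 < t := by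
  rw [neutralCos_eq_sqrt ⟨by linarith [ht.1], ht.2⟩, Real.sqrt_lt' one_pos, one_pow,
    div_lt_one two_pos, ← lt_sub_iff_add_lt', Real.sqrt_lt' (by norm_num)]
  constructor
  · intro h
    exact lt_of_le_of_ne ht.1 (by rintro rfl; norm_num at h)
  · intro h
    nlinarith

section NeutralCone

variable {J : H →L[ℂ] H}

lemma norm_plusProj_of_norm_eq_one (hJs : (J : H →ₗ[ℂ] H).IsSymmetric) (hJsq : J ∘L J = 1)
    {x : H} (hx : ‖x‖ = 1) : ‖plusProj J x‖ = Real.sqrt ((1 + (⟪J x, x⟫).re) / 2) := by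
  have h := norm_plusProj_sq hJs hJsq x
  rw [hx, one_pow] at h
  rw [← h, Real.sqrt_sq (norm_nonneg _)]

lemma norm_minusProj_of_norm_eq_one (hJs : (J : H →ₗ[ℂ] H).IsSymmetric) (hJsq : J ∘L J = 1)
    {x : H} (hx : ‖x‖ = 1) : ‖minusProj J x‖ = Real.sqrt ((1 - (⟪J x, x⟫).re) / 2) := by
  have h := norm_minusProj_sq hJs hJsq x
  rw [hx, one_pow] at h
  rw [← h, Real.sqrt_sq (norm_nonneg _)]

lemma norm_inner_le_neutralCos (hJs : (J : H →ₗ[ℂ] H).IsSymmetric) (hJsq : J ∘L J = 1)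
    {m n : H} (hm : ‖m‖ = 1) (hn : ‖n‖ = 1) (hn0 : ⟪J n, n⟫ = 0) :
    ‖⟪m, n⟫‖ ≤ neutralCos (⟪J m, m⟫).re := by
  have hhalf : Real.sqrt (1 / 2) = 1 / Real.sqrt 2 := by
    rw [Real.sqrt_div' _ zero_le_two, Real.sqrt_one]
  have hnP : ‖plusProj J n‖ = 1 / Real.sqrt 2 := by
    rw [norm_plusProj_of_norm_eq_one hJs hJsq hn, hn0, Complex.zero_re, add_zero, hhalf]
  have hnM : ‖minusProj J n‖ = 1 / Real.sqrt 2 := by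
    rw [norm_minusProj_of_norm_eq_one hJs hJsq hn, hn0, Complex.zero_re, sub_zero, hhalf]
  calc ‖⟪m, n⟫‖
      ≤ ‖plusProj J m‖ * ‖plusProj J n‖ + ‖minusProj J m‖ * ‖minusProj J n‖ := by
        rw [inner_eq_inner_plusProj_add hJs hJsq]
        exact (norm_add_le _ _).trans (add_le_add (norm_inner_le_norm _ _) (norm_inner_le_norm _ _))
    _ = neutralCos (⟪J m, m⟫).re := by
        rw [hnP, hnM, norm_plusProj_of_norm_eq_one hJs hJsq hm,
          norm_minusProj_of_norm_eq_one hJs hJsq hm, neutralCos]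
        ring

lemma exists_neutral_norm_inner_eq_neutralCos (hJs : (J : H →ₗ[ℂ] H).IsSymmetric)
    (hJsq : J ∘L J = 1) (hp : LinearMap.ker ((J - 1 : H →L[ℂ] H) : H →ₗ[ℂ] H) ≠ ⊥)
    (hm : LinearMap.ker ((J + 1 : H →L[ℂ] H) : H →ₗ[ℂ] H) ≠ ⊥) {m : H} (hm1 : ‖m‖ = 1) :
    ∃ n : H, ⟪J n, n⟫ = 0 ∧ ‖n‖ = 1 ∧ ‖⟪m, n⟫‖ = neutralCos (⟪J m, m⟫).re := by
  obtain ⟨u, hu, hu1, hmu⟩ := exists_mem_norm_eq_one_inner_eq_norm hp (plusProj_mem_ker hJsq m)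
  obtain ⟨v, hv, hv1, hmv⟩ := exists_mem_norm_eq_one_inner_eq_norm hm (minusProj_mem_ker hJsq m)
  rw [mem_ker_sub_one_iff] at hu
  rw [mem_ker_add_one_iff] at hv
  set c : ℂ := (((Real.sqrt 2)⁻¹ : ℝ) : ℂ)
  have hPn : plusProj J (c • (u + v)) = c • u := by
    rw [plusProj_apply, map_smul, map_add, hu, hv]
    module
  have hQn : minusProj J (c • (u + v)) = c • v := by
    rw [minusProj_apply, map_smul, map_add, hu, hv]
    module
  have hc : ‖c‖ = (Real.sqrt 2)⁻¹ := by simp [c]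
  refine ⟨c • (u + v), ?_, ?_, ?_⟩
  · rw [inner_apply_eq_inner_plusProj_sub hJs hJsq, hPn, hQn, inner_self_eq_norm_sq_to_K,
      inner_self_eq_norm_sq_to_K, norm_smul, norm_smul, hu1, hv1, sub_self]
  · have hsq : ‖c • (u + v)‖ ^ 2 = 1 := by
      rw [← inner_self_eq_norm_sq (𝕜 := ℂ), inner_eq_inner_plusProj_add hJs hJsq, hPn, hQn,
        map_add, inner_self_eq_norm_sq, inner_self_eq_norm_sq, norm_smul, norm_smul, hu1, hv1,
        hc, mul_one, inv_pow, Real.sq_sqrt zero_le_two]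
      norm_num
    exact (pow_eq_one_iff_of_nonneg (norm_nonneg _) two_ne_zero).mp hsq
  · have hinner : ⟪m, c • (u + v)⟫ =
        (((Real.sqrt 2)⁻¹ * (‖plusProj J m‖ + ‖minusProj J m‖) : ℝ) : ℂ) := by
      rw [inner_eq_inner_plusProj_add hJs hJsq, hPn, hQn, inner_smul_right, inner_smul_right,
        hmu, hmv]
      simp only [c]
      push_cast
      ring
    rw [hinner, Complex.norm_real, Real.norm_of_nonneg (by positivity),
      norm_plusProj_of_norm_eq_one hJs hJsq hm1, norm_minusProj_of_norm_eq_one hJs hJsq hm1,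
      neutralCos, one_div]

end NeutralCone

/-- The definiteness bound of `M` is the infimum of this set. -/
def jFormOnSphere (J : H →L[ℂ] H) (M : Submodule ℂ H) : Set ℝ :=
  {t | ∃ m ∈ M, ‖m‖ = 1 ∧ (⟪J m, m⟫).re = t}

section DefinitenessBound

variable {J : H →L[ℂ] H} {M : Submodule ℂ H}

lemma jFormOnSphere_nonempty (hM : M ≠ ⊥) : (jFormOnSphere J M).Nonempty :=
  let ⟨m, hmM, hm1⟩ := exists_mem_norm_eq_one hM
  ⟨_, m, hmM, hm1, rfl⟩

lemma le_one_of_mem_jFormOnSphere (hJs : (J : H →ₗ[ℂ] H).IsSymmetric) (hJsq : J ∘L J = 1)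
    {t : ℝ} (ht : t ∈ jFormOnSphere J M) : t ≤ 1 := by
  obtain ⟨m, -, hm1, rfl⟩ := ht
  simpa [hm1] using re_inner_apply_self_le hJs hJsq m

lemma mul_norm_sq_le_of_mem_lowerBounds {β : ℝ} (hβ : β ∈ lowerBounds (jFormOnSphere J M)) :
    ∀ x ∈ M, β * ‖x‖ ^ 2 ≤ (⟪J x, x⟫).re := by
  intro x hx
  rcases eq_or_ne x 0 with rfl | hx0
  · simp
  have hunit := hβ ⟨_, M.smul_mem (‖x‖⁻¹ : ℂ) hx, norm_smul_inv_norm hx0, rfl⟩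
  rwa [map_smul, inner_smul_left, inner_smul_right, ← mul_assoc, ← Complex.ofReal_inv,
    Complex.conj_ofReal, ← Complex.ofReal_mul, Complex.re_ofReal_mul, ← mul_inv, ← sq,
    ← div_eq_inv_mul, le_div_iff₀ (by positivity)] at hunit

lemma isGLB_jFormOnSphere (hJs : (J : H →ₗ[ℂ] H).IsSymmetric) (hJsq : J ∘L J = 1)
    (hM : M ≠ ⊥) {α : ℝ} (hα : 0 ≤ α) (hlow : ∀ x ∈ M, α * ‖x‖ ^ 2 ≤ (⟪J x, x⟫).re)
    (hmax : ∀ β ∈ Set.Icc (0 : ℝ) 1, (∀ x ∈ M, β * ‖x‖ ^ 2 ≤ (⟪J x, x⟫).re) → β ≤ α) :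
    IsGLB (jFormOnSphere J M) α := by
  refine ⟨?_, fun β hβ => ?_⟩
  · rintro _ ⟨m, hmM, hm1, rfl⟩
    simpa [hm1] using hlow m hmM
  rcases le_or_gt β 0 with hβ0 | hβ0
  · exact hβ0.trans hα
  obtain ⟨t, ht⟩ := jFormOnSphere_nonempty (J := J) hM
  have hβ1 : β ≤ 1 := (hβ ht).trans (le_one_of_mem_jFormOnSphere hJs hJsq ht)
  exact hmax β ⟨hβ0.le, hβ1⟩ (mul_norm_sq_le_of_mem_lowerBounds hβ)

lemma c0_eq_neutralCos (hJs : (J : H →ₗ[ℂ] H).IsSymmetric) (hJsq : J ∘L J = 1)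
    (hp : LinearMap.ker ((J - 1 : H →L[ℂ] H) : H →ₗ[ℂ] H) ≠ ⊥)
    (hm : LinearMap.ker ((J + 1 : H →L[ℂ] H) : H →ₗ[ℂ] H) ≠ ⊥) (hM : M ≠ ⊥) {α : ℝ}
    (hα : 0 ≤ α) (hglb : IsGLB (jFormOnSphere J M) α) : c0 J M = neutralCos α := by
  have hsub : jFormOnSphere J M ⊆ Set.Icc 0 1 := fun t ht =>
    ⟨hα.trans (hglb.1 ht), le_one_of_mem_jFormOnSphere hJs hJsq ht⟩
  have hlub : IsLUB (neutralCos '' jFormOnSphere J M) (neutralCos α) :=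
    hglb.isLUB_of_tendsto (antitoneOn_neutralCos.mono hsub) (jFormOnSphere_nonempty hM)
      continuous_neutralCos.continuousWithinAt
  unfold c0
  suffices h : IsLUB _ (neutralCos α) from h.csSup_eq h.nonempty
  constructor
  · rintro _ ⟨m, hmM, n, hn0, hm1, hn1, rfl⟩
    exact (norm_inner_le_neutralCos hJs hJsq hm1 hn1 hn0).trans
      (hlub.1 ⟨_, ⟨m, hmM, hm1, rfl⟩, rfl⟩)
  · intro b hb
    refine hlub.2 ?_
    rintro _ ⟨_, ⟨m, hmM, hm1, rfl⟩, rfl⟩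
    obtain ⟨n, hn0, hn1, hmn⟩ := exists_neutral_norm_inner_eq_neutralCos hJs hJsq hp hm hm1
    exact hb ⟨m, hmM, n, hn0, hm1, hn1, hmn.symm⟩

lemma unifJPos_or_unifJNeg_iff (hM : M ≠ ⊥) {α : ℝ} (hα : 0 ≤ α)
    (hglb : IsGLB (jFormOnSphere J M) α) : UnifJPos J M ∨ UnifJNeg J M ↔ 0 < α := by
  refine ⟨?_, fun hα => Or.inl ⟨α, hα, mul_norm_sq_le_of_mem_lowerBounds hglb.1⟩⟩
  rintro (⟨β, hβ, hpos⟩ | ⟨β, hβ, hneg⟩)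
  · refine hβ.trans_le (hglb.2 ?_)
    rintro _ ⟨m, hmM, hm1, rfl⟩
    simpa [hm1] using hpos m hmM
  · obtain ⟨_, m, hmM, hm1, rfl⟩ := jFormOnSphere_nonempty (J := J) hM
    have hαm := hglb.1 ⟨m, hmM, hm1, rfl⟩
    have hβm := hneg m hmM
    rw [hm1] at hβm
    linarith

end DefinitenessBound

section Negation

variable {J : H →L[ℂ] H} {M : Submodule ℂ H}

lemma re_inner_neg_apply_self (x : H) : (⟪(-J) x, x⟫).re = -(⟪J x, x⟫).re := by
  rw [neg_apply, inner_neg_left, Complex.neg_re]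

lemma c0_neg : c0 (-J) M = c0 J M := by
  simp only [c0, neg_apply, inner_neg_left, neg_eq_zero]

lemma unifJPos_neg : UnifJPos (-J) M ↔ UnifJNeg J M := by
  simp only [UnifJPos, UnifJNeg, re_inner_neg_apply_self, le_neg]

lemma unifJNeg_neg : UnifJNeg (-J) M ↔ UnifJPos J M := by
  simp only [UnifJPos, UnifJNeg, re_inner_neg_apply_self, neg_le_neg_iff]

lemma ker_neg_sub_one :
    LinearMap.ker ((-J - 1 : H →L[ℂ] H) : H →ₗ[ℂ] H) =
      LinearMap.ker ((J + 1 : H →L[ℂ] H) : H →ₗ[ℂ] H) := by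
  ext x
  rw [mem_ker_sub_one_iff, mem_ker_add_one_iff, neg_apply, neg_eq_iff_eq_neg]

lemma ker_neg_add_one :
    LinearMap.ker ((-J + 1 : H →L[ℂ] H) : H →ₗ[ℂ] H) =
      LinearMap.ker ((J - 1 : H →L[ℂ] H) : H →ₗ[ℂ] H) := by
  ext x
  rw [mem_ker_sub_one_iff, mem_ker_add_one_iff, neg_apply, neg_inj]

end Negation

lemma c0_eq_neutralCos_and_unif_iff {J : H →L[ℂ] H} (hJs : (J : H →ₗ[ℂ] H).IsSymmetric)
    (hJsq : J ∘L J = 1) (hp : LinearMap.ker ((J - 1 : H →L[ℂ] H) : H →ₗ[ℂ] H) ≠ ⊥)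
    (hm : LinearMap.ker ((J + 1 : H →L[ℂ] H) : H →ₗ[ℂ] H) ≠ ⊥) {M : Submodule ℂ H} (hM : M ≠ ⊥)
    {α : ℝ} (hα : α ∈ Set.Icc (0 : ℝ) 1) (hglb : IsGLB (jFormOnSphere J M) α) :
    c0 J M = neutralCos α ∧ (UnifJPos J M ∨ UnifJNeg J M ↔ c0 J M < 1) := by
  have hc0 := c0_eq_neutralCos hJs hJsq hp hm hM hα.1 hglb
  rw [hc0, neutralCos_lt_one_iff hα, unifJPos_or_unifJNeg_iff hM hα.1 hglb]
  exact ⟨rfl, Iff.rfl⟩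

/-- the minimal angle between a `J`-semidefinite subspace with definiteness bound
`α` and the neutral cone: `c₀(M,C) = (1/√2)(√((1+α)/2) + √((1-α)/2))`; `M` is uniformly
`J`-definite iff `c₀(M,C) < 1`. -/
theorem statement7 {H : Type*} [NormedAddCommGroup H] [InnerProductSpace ℂ H] [CompleteSpace H]
    (J : H →L[ℂ] H) (hJsa : IsSelfAdjoint J) (hJsq : J ∘L J = 1)
    (hp : LinearMap.ker ((J - 1 : H →L[ℂ] H) : H →ₗ[ℂ] H) ≠ ⊥) (hm : LinearMap.ker ((J + 1 : H →L[ℂ] H) : H →ₗ[ℂ] H) ≠ ⊥)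
    (M : Submodule ℂ H) (hM : M ≠ ⊥) (α : ℝ) (hα01 : α ∈ Set.Icc (0:ℝ) 1)
    (hcase :
      ((∀ x ∈ M, α * ‖x‖ ^ 2 ≤ (⟪J x, x⟫).re) ∧
        ∀ β ∈ Set.Icc (0:ℝ) 1, (∀ x ∈ M, β * ‖x‖ ^ 2 ≤ (⟪J x, x⟫).re) → β ≤ α) ∨
      ((∀ x ∈ M, (⟪J x, x⟫).re ≤ -(α * ‖x‖ ^ 2)) ∧
        ∀ β ∈ Set.Icc (0:ℝ) 1, (∀ x ∈ M, (⟪J x, x⟫).re ≤ -(β * ‖x‖ ^ 2)) → β ≤ α)) :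
    c0 J M = 1 / Real.sqrt 2 * (Real.sqrt ((1 + α) / 2) + Real.sqrt ((1 - α) / 2)) ∧
      ((UnifJPos J M ∨ UnifJNeg J M) ↔ c0 J M < 1) := by
  rcases hcase with ⟨hlow, hmax⟩ | ⟨hlow, hmax⟩
  · exact c0_eq_neutralCos_and_unif_iff hJsa.isSymmetric hJsq hp hm hM hα01
      (isGLB_jFormOnSphere hJsa.isSymmetric hJsq hM hα01.1 hlow hmax)
  · have hJsq' : (-J) ∘L (-J) = 1 := by rw [neg_comp, comp_neg, neg_neg, hJsq]
    have hglb : IsGLB (jFormOnSphere (-J) M) α :=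
      isGLB_jFormOnSphere hJsa.neg.isSymmetric hJsq' hM hα01.1
        (by simpa only [re_inner_neg_apply_self, le_neg] using hlow)
        (by simpa only [re_inner_neg_apply_self, le_neg] using hmax)
    have h := c0_eq_neutralCos_and_unif_iff hJsa.neg.isSymmetric hJsq' (by rwa [ker_neg_sub_one])
      (by rwa [ker_neg_add_one]) hM hα01 hglb
    rwa [c0_neg, unifJPos_neg, unifJNeg_neg, or_comm] at h

end KreinFrames
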